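/- If X satisfies condition (FS) and (U, V) : X → Y is a functional homomorphism, then the induced ring homomorphism U ⊗ V : K_R(X) → K_R(Y) is injective. -/

import Mathlib

/-!
Under (FS) every `t = Σᵢ xᵢ ⊗ φᵢ ∈ K_R(X)` satisfies `t = Θ₁ t Θ₂`, which expands to
`t = Σⱼₖ yⱼ ⊗ ψⱼ(t zₖ) χₖ`; so `t` is determined by its matrix coefficients `ψ(t z)`.
A functional homomorphism preserves them, `h(Vψ ⊗ ((U ⊗ V) t)(U z)) = g(ψ ⊗ t z)`,
hence `(U ⊗ V) t = 0` forces `t = 0`.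
-/

/-- A right functional `R`-module `(X, X', g)`: `X` a right `R`-module, `X'` a left
`R`-module (over a possibly non-unital ring `R`), and `g : X' ⊗_ℤ X → R` an
`R`-bimodule map, encoded here as a biadditive map `g : X' → X → R`. -/
structure FnMod (R X X' : Type) [NonUnitalRing R] [AddCommGroup X] [AddCommGroup X'] where
  sm : X → R → X
  sm' : R → X' → X'
  g : X' → X → R
  sm_add_left : ∀ x y r, sm (x + y) r = sm x r + sm y r
  sm_add_right : ∀ x r s, sm x (r + s) = sm x r + sm x s
  sm_mul : ∀ x r s, sm x (r * s) = sm (sm x r) s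
  sm'_add_left : ∀ r φ ψ, sm' r (φ + ψ) = sm' r φ + sm' r ψ
  sm'_add_right : ∀ r s φ, sm' (r + s) φ = sm' r φ + sm' s φ
  sm'_mul : ∀ r s φ, sm' (r * s) φ = sm' r (sm' s φ)
  g_add_left : ∀ φ ψ x, g (φ + ψ) x = g φ x + g ψ x
  g_add_right : ∀ φ x y, g φ (x + y) = g φ x + g φ y
  g_sm' : ∀ r φ x, g (sm' r φ) x = r * g φ x
  g_sm : ∀ φ x r, g φ (sm x r) = g φ x * r

namespace FnMod
variable {R X X' : Type} [NonUnitalRing R] [AddCommGroup X] [AddCommGroup X']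

/-- `f : X → X` is additive and right `R`-linear. -/
def RLinear (M : FnMod R X X') (f : X → X) : Prop :=
  (∀ x y, f (x + y) = f x + f y) ∧ ∀ x r, f (M.sm x r) = M.sm (f x) r

/-- `f : X' → X'` is additive and left `R`-linear. -/
def RLinear' (M : FnMod R X X') (f : X' → X') : Prop :=
  (∀ φ ψ, f (φ + ψ) = f φ + f ψ) ∧ ∀ r φ, f (M.sm' r φ) = M.sm' r (f φ)

/-- `fs` is an adjoint of `f`: `g(φ ⊗ f x) = g(fs φ ⊗ x)`. -/
def IsAdjoint (M : FnMod R X X') (f : X → X) (fs : X' → X') : Prop :=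
  ∀ φ x, M.g φ (f x) = M.g (fs φ) x

/-- `f` is an adjointable endomorphism of the functional module. -/
def Adjointable (M : FnMod R X X') (f : X → X) : Prop :=
  M.RLinear f ∧ ∃ fs, M.RLinear' fs ∧ M.IsAdjoint f fs

/-- Non-degeneracy of the scalar product. -/
def Nondeg (M : FnMod R X X') : Prop :=
  (∀ x, (∀ φ, M.g φ x = 0) → x = 0) ∧ ∀ φ, (∀ x, M.g φ x = 0) → φ = 0

/-- Condition (FS): finite families of vectors (resp. functionals) admit a compact
operator `Θ₁ = Σⱼ yⱼ ⊗ ψⱼ` (resp. `Θ₂ = Σⱼ zⱼ ⊗ χⱼ`) acting as the identity on them. -/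
def FS (M : FnMod R X X') : Prop :=
  ∀ (n : ℕ) (x : Fin n → X) (φ : Fin n → X'),
    ∃ (m₁ : ℕ) (y : Fin m₁ → X) (ψ : Fin m₁ → X') (m₂ : ℕ) (z : Fin m₂ → X) (χ : Fin m₂ → X'),
      (∀ i, ∑ j, M.sm (y j) (M.g (ψ j) (x i)) = x i) ∧
      (∀ i, ∑ j, M.sm' (M.g (φ i) (z j)) (χ j) = φ i)

/-- The rank-one operator `θ_{x,φ} : y ↦ x · g(φ ⊗ y)`. -/
def theta (M : FnMod R X X') (x : X) (φ : X') : X → X := fun y => M.sm x (M.g φ y)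

end FnMod
noncomputable section

open scoped TensorProduct

/-- The subgroup of `A ⊗_ℤ B` generated by the balancing relations
`(a·r) ⊗ b − a ⊗ (r·b)` for a right action `ra` on `A` and left action `lb` on `B`. -/
def BalRel (R A B : Type) [NonUnitalRing R] [AddCommGroup A] [AddCommGroup B]
    (ra : A → R → A) (lb : R → B → B) : AddSubgroup (TensorProduct ℤ A B) :=
  AddSubgroup.closure {z | ∃ (a : A) (r : R) (b : B), z = (ra a r) ⊗ₜ[ℤ] b - a ⊗ₜ[ℤ] (lb r b)}

/-- The balanced tensor product `A ⊗_R B` over the (possibly non-unital) ring `R`. -/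
def TensB (R A B : Type) [NonUnitalRing R] [AddCommGroup A] [AddCommGroup B]
    (ra : A → R → A) (lb : R → B → B) : Type :=
  TensorProduct ℤ A B ⧸ BalRel R A B ra lb

instance TensB.instAddCommGroup (R A B : Type) [NonUnitalRing R] [AddCommGroup A]
    [AddCommGroup B] (ra : A → R → A) (lb : R → B → B) :
    AddCommGroup (TensB R A B ra lb) := by
  delta TensB; infer_instance

/-- The class of the pure tensor `a ⊗ b` in `A ⊗_R B`. -/
def TensB.mk {R A B : Type} [NonUnitalRing R] [AddCommGroup A] [AddCommGroup B]
    (ra : A → R → A) (lb : R → B → B) (a : A) (b : B) : TensB R A B ra lb :=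
  QuotientAddGroup.mk (a ⊗ₜ[ℤ] b)

namespace FnMod
variable {R X X' : Type} [NonUnitalRing R] [AddCommGroup X] [AddCommGroup X']

/-- The abelian group `K_R(X) = X ⊗_R X'` of "compact operators". -/
def K (M : FnMod R X X') : Type := TensB R X X' M.sm M.sm'

instance (M : FnMod R X X') : AddCommGroup M.K := by delta K; infer_instance

/-- The class of `x ⊗ φ` in `K_R(X)`. -/
def kTen (M : FnMod R X X') (x : X) (φ : X') : M.K := TensB.mk M.sm M.sm' x φ

end FnMod

/-- A functional homomorphism `(U, V) : (X, X', g) → (Y, Y', h)` between right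
functional `R`-modules: `R`-module maps with `h(V φ ⊗ U x) = g(φ ⊗ x)`. -/
structure FnHom {R X X' Y Y' : Type} [NonUnitalRing R] [AddCommGroup X] [AddCommGroup X']
    [AddCommGroup Y] [AddCommGroup Y'] (M : FnMod R X X') (N : FnMod R Y Y') where
  U : X → Y
  V : X' → Y'
  U_add : ∀ x y, U (x + y) = U x + U y
  U_sm : ∀ x r, U (M.sm x r) = N.sm (U x) r
  V_add : ∀ φ ψ, V (φ + ψ) = V φ + V ψ
  V_sm : ∀ r φ, V (M.sm' r φ) = N.sm' r (V φ)
  pair : ∀ φ x, N.g (V φ) (U x) = M.g φ x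

def TensB.lift {R A B C : Type} [NonUnitalRing R] [AddCommGroup A] [AddCommGroup B]
    [AddCommGroup C] (ra : A → R → A) (lb : R → B → B) (f : A →+ B →+ C)
    (hf : ∀ a r b, f (ra a r) b = f a (lb r b)) : TensB R A B ra lb →+ C :=
  QuotientAddGroup.lift _
    (TensorProduct.liftAddHom f fun n a b => by
      simp only [map_zsmul, AddMonoidHom.coe_smul, Pi.smul_apply]) <| by
    rw [BalRel, AddSubgroup.closure_le]
    rintro _ ⟨a, r, b, rfl⟩
    simp [hf]

namespace FnMod

variable {R X X' : Type} [NonUnitalRing R] [AddCommGroup X] [AddCommGroup X']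
  (M : FnMod R X X')

theorem sm'_zero_left (φ : X') : M.sm' 0 φ = 0 :=
  (AddMonoidHom.mk' (M.sm' · φ) (M.sm'_add_right · · φ)).map_zero

theorem sm'_sum_left {ι : Type} (s : Finset ι) (r : ι → R) (φ : X') :
    M.sm' (∑ i ∈ s, r i) φ = ∑ i ∈ s, M.sm' (r i) φ :=
  map_sum (AddMonoidHom.mk' (M.sm' · φ) (M.sm'_add_right · · φ)) r s

theorem sm'_sum_right {ι : Type} (s : Finset ι) (r : R) (φ : ι → X') :
    M.sm' r (∑ i ∈ s, φ i) = ∑ i ∈ s, M.sm' r (φ i) :=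
  map_sum (AddMonoidHom.mk' (M.sm' r) (M.sm'_add_left r)) φ s

theorem kTen_add_left (x y : X) (φ : X') : M.kTen (x + y) φ = M.kTen x φ + M.kTen y φ := by
  simp only [kTen, TensB.mk, TensorProduct.add_tmul]
  rfl

theorem kTen_add_right (x : X) (φ ψ : X') : M.kTen x (φ + ψ) = M.kTen x φ + M.kTen x ψ := by
  simp only [kTen, TensB.mk, TensorProduct.tmul_add]
  rfl

theorem kTen_zero_right (x : X) : M.kTen x 0 = 0 :=
  (AddMonoidHom.mk' (M.kTen x) (M.kTen_add_right x)).map_zero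

theorem kTen_sum_left {ι : Type} (s : Finset ι) (x : ι → X) (φ : X') :
    M.kTen (∑ i ∈ s, x i) φ = ∑ i ∈ s, M.kTen (x i) φ :=
  map_sum (AddMonoidHom.mk' (M.kTen · φ) (M.kTen_add_left · · φ)) x s

theorem kTen_sum_right {ι : Type} (s : Finset ι) (x : X) (φ : ι → X') :
    M.kTen x (∑ i ∈ s, φ i) = ∑ i ∈ s, M.kTen x (φ i) :=
  map_sum (AddMonoidHom.mk' (M.kTen x) (M.kTen_add_right x)) φ s

theorem kTen_sm (x : X) (r : R) (φ : X') : M.kTen (M.sm x r) φ = M.kTen x (M.sm' r φ) :=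
  (QuotientAddGroup.eq_iff_sub_mem (N := BalRel R X X' M.sm M.sm')).mpr
    (AddSubgroup.subset_closure ⟨x, r, φ, rfl⟩)

theorem exists_eq_sum_kTen (t : M.K) :
    ∃ (n : ℕ) (x : Fin n → X) (φ : Fin n → X'), t = ∑ i, M.kTen (x i) (φ i) := by
  obtain ⟨s, rfl⟩ := QuotientAddGroup.mk_surjective t
  induction s using TensorProduct.induction_on with
  | zero => exact ⟨0, ![], ![], rfl⟩
  | tmul x φ => exact ⟨1, ![x], ![φ], by simp only [Finset.univ_unique, Finset.sum_singleton]; rfl⟩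
  | add s s' hs hs' =>
    obtain ⟨n, x, φ, hs⟩ := hs
    obtain ⟨n', x', φ', hs'⟩ := hs'
    refine ⟨n + n', Fin.append x x', Fin.append φ φ', ?_⟩
    rw [Fin.sum_univ_add]
    simp only [Fin.append_left, Fin.append_right, ← hs, ← hs']
    rfl

/-- The matrix coefficient `t ↦ ψ (t z)` of a compact operator `t ∈ K_R(X)`. -/
def coeff (ψ : X') (z : X) : M.K →+ R :=
  TensB.lift M.sm M.sm'
    (AddMonoidHom.mk'
      (fun x => AddMonoidHom.mk' (fun φ => M.g ψ x * M.g φ z)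
        fun φ φ' => by rw [M.g_add_left, mul_add])
      fun x x' => by ext φ; simp [M.g_add_right, add_mul])
    fun x r φ => by simp [M.g_sm, M.g_sm', mul_assoc]

@[simp]
theorem coeff_kTen (ψ : X') (z x : X) (φ : X') :
    M.coeff ψ z (M.kTen x φ) = M.g ψ x * M.g φ z :=
  rfl

theorem kTen_eq_sandwich {m₁ m₂ : ℕ} {y : Fin m₁ → X} {ψ : Fin m₁ → X'}
    {z : Fin m₂ → X} {χ : Fin m₂ → X'} {x : X} {φ : X'}
    (hx : ∑ j, M.sm (y j) (M.g (ψ j) x) = x) (hφ : ∑ k, M.sm' (M.g φ (z k)) (χ k) = φ) :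
    M.kTen x φ = ∑ j, ∑ k, M.kTen (y j) (M.sm' (M.g (ψ j) x * M.g φ (z k)) (χ k)) := by
  conv_lhs => rw [← hx]
  rw [M.kTen_sum_left]
  refine Finset.sum_congr rfl fun j _ => ?_
  conv_lhs => rw [M.kTen_sm, ← hφ, M.sm'_sum_right, M.kTen_sum_right]
  simp only [M.sm'_mul]

theorem sum_kTen_eq_sum_coeff {n m₁ m₂ : ℕ} {x : Fin n → X} {φ : Fin n → X'}
    {y : Fin m₁ → X} {ψ : Fin m₁ → X'} {z : Fin m₂ → X} {χ : Fin m₂ → X'}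
    (hx : ∀ i, ∑ j, M.sm (y j) (M.g (ψ j) (x i)) = x i)
    (hφ : ∀ i, ∑ k, M.sm' (M.g (φ i) (z k)) (χ k) = φ i) :
    ∑ i, M.kTen (x i) (φ i) =
      ∑ j, ∑ k, M.kTen (y j) (M.sm' (M.coeff (ψ j) (z k) (∑ i, M.kTen (x i) (φ i))) (χ k)) := by
  calc ∑ i, M.kTen (x i) (φ i)
      = ∑ i, ∑ j, ∑ k, M.kTen (y j) (M.sm' (M.g (ψ j) (x i) * M.g (φ i) (z k)) (χ k)) :=
        Finset.sum_congr rfl fun i _ => M.kTen_eq_sandwich (hx i) (hφ i)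
    _ = _ := by
      rw [Finset.sum_comm]
      refine Finset.sum_congr rfl fun j _ => ?_
      rw [Finset.sum_comm]
      refine Finset.sum_congr rfl fun k _ => ?_
      simp only [map_sum, coeff_kTen, M.sm'_sum_left, M.kTen_sum_right]

theorem FS.eq_zero_of_coeff_eq_zero {M : FnMod R X X'} (hFS : M.FS) {t : M.K}
    (ht : ∀ ψ z, M.coeff ψ z t = 0) : t = 0 := by
  obtain ⟨n, x, φ, rfl⟩ := M.exists_eq_sum_kTen t
  obtain ⟨m₁, y, ψ, m₂, z, χ, hx, hφ⟩ := hFS n x φ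
  rw [M.sum_kTen_eq_sum_coeff hx hφ]
  simp only [ht, M.sm'_zero_left, M.kTen_zero_right, Finset.sum_const_zero]

end FnMod

theorem FnHom.coeff_map {R X X' Y Y' : Type} [NonUnitalRing R] [AddCommGroup X]
    [AddCommGroup X'] [AddCommGroup Y] [AddCommGroup Y'] {M : FnMod R X X'} {N : FnMod R Y Y'}
    (F : FnHom M N) (Φ : M.K →+ N.K) (hΦ : ∀ x φ, Φ (M.kTen x φ) = N.kTen (F.U x) (F.V φ))
    (ψ : X') (z : X) (t : M.K) : N.coeff (F.V ψ) (F.U z) (Φ t) = M.coeff ψ z t := by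
  obtain ⟨n, x, φ, rfl⟩ := M.exists_eq_sum_kTen t
  simp only [map_sum, hΦ, FnMod.coeff_kTen, F.pair]

/-- If `X` satisfies condition (FS) and `(U,V) : X → Y` is a
functional homomorphism, then the induced homomorphism
`U ⊗ V : K_R(X) → K_R(Y)` is injective. -/
theorem stmt10 {R X X' Y Y' : Type} [NonUnitalRing R] [AddCommGroup X] [AddCommGroup X']
    [AddCommGroup Y] [AddCommGroup Y'] (M : FnMod R X X') (N : FnMod R Y Y')
    (F : FnHom M N) (hFS : M.FS) :
    ∀ Φ : M.K → N.K,
      (∀ a b, Φ (a + b) = Φ a + Φ b) →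
      (∀ x φ, Φ (M.kTen x φ) = N.kTen (F.U x) (F.V φ)) →
      Function.Injective Φ := by
  intro Φ hadd hten
  let Φ' : M.K →+ N.K := AddMonoidHom.mk' Φ hadd
  refine (injective_iff_map_eq_zero Φ').mpr fun t ht => hFS.eq_zero_of_coeff_eq_zero fun ψ z => ?_
  rw [← F.coeff_map Φ' hten, ht, map_zero]

end
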